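/- Let 2N/(N+2) < p < 2 and let ξ, η, ζ ∈ ℝ^(kN) satisfy |ζ| ≤ |ξ - ζ|. Then |η - ζ|^p ≤ |ξ - η|^p + 5^(2-p)(|ζ|² + |η|²)^((p-2)/2)|ζ - η|^2. -/
import Mathlib


/-- Pointwise inequality in the subquadratic case: if `|ζ| ≤ |ξ - ζ|` then
`|η-ζ|^p ≤ |ξ-η|^p + 5^(2-p)(|ζ|²+|η|²)^((p-2)/2)|ζ-η|²`. -/
theorem stmt_15 (N k : ℕ) (hN : 1 ≤ N) (p : ℝ) (hp1 : 2 * N / (N + 2) < p) (hp2 : p < 2)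
    (ξ η ζ : EuclideanSpace ℝ (Fin (k * N))) (h : ‖ζ‖ ≤ ‖ξ - ζ‖) :
    ‖η - ζ‖ ^ p ≤ ‖ξ - η‖ ^ p +
      (5 : ℝ) ^ (2 - p) * (‖ζ‖ ^ 2 + ‖η‖ ^ 2) ^ ((p - 2) / 2) * ‖ζ - η‖ ^ 2 := by
  have hNpos : (0 : ℝ) < N := by exact_mod_cast hN
  have hp0 : (0 : ℝ) < p := lt_of_lt_of_le (by positivity) hp1.le
  by_cases hle : ‖η - ζ‖ ≤ ‖ξ - η‖
  · have h1 : ‖η - ζ‖ ^ p ≤ ‖ξ - η‖ ^ p :=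
      Real.rpow_le_rpow (norm_nonneg _) hle hp0.le
    have h2 : (0 : ℝ) ≤ (5 : ℝ) ^ (2 - p) * (‖ζ‖ ^ 2 + ‖η‖ ^ 2) ^ ((p - 2) / 2) * ‖ζ - η‖ ^ 2 := by
      positivity
    linarith
  · push_neg at hle
    set t := ‖η - ζ‖ with ht
    have ht0 : 0 < t := lt_of_le_of_lt (norm_nonneg _) hle
    have hζt : ‖ζ‖ ≤ 2 * t := by
      have : ‖ξ - ζ‖ ≤ ‖ξ - η‖ + ‖η - ζ‖ := by
        have : ξ - ζ = (ξ - η) + (η - ζ) := by abel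
        rw [this]; exact norm_add_le _ _
      linarith
    have hηt : ‖η‖ ≤ 3 * t := by
      have : ‖η‖ ≤ ‖ζ‖ + ‖η - ζ‖ := by
        have h' : η = ζ + (η - ζ) := by abel
        calc ‖η‖ = ‖ζ + (η - ζ)‖ := by rw [← h']
          _ ≤ ‖ζ‖ + ‖η - ζ‖ := norm_add_le _ _
      linarith
    have hbase : ‖ζ‖ ^ 2 + ‖η‖ ^ 2 ≤ 25 * t ^ 2 := by
      nlinarith [norm_nonneg ζ, norm_nonneg η]
    have hbpos : (0 : ℝ) < 25 * t ^ 2 := by positivity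
    have hmono : (25 * t ^ 2 : ℝ) ^ ((p - 2) / 2) ≤ (‖ζ‖ ^ 2 + ‖η‖ ^ 2) ^ ((p - 2) / 2) := by
      apply Real.rpow_le_rpow_of_nonpos
      · rcases eq_or_lt_of_le (by positivity : (0:ℝ) ≤ ‖ζ‖ ^ 2 + ‖η‖ ^ 2) with h0 | h0
        · exfalso
          have hz : ‖ζ‖ = 0 := by nlinarith [sq_nonneg ‖ζ‖, sq_nonneg ‖η‖, norm_nonneg ζ, norm_nonneg η]
          have hh : ‖η‖ = 0 := by nlinarith [sq_nonneg ‖ζ‖, sq_nonneg ‖η‖, norm_nonneg ζ, norm_nonneg η]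
          have : η - ζ = 0 := by
            rw [norm_eq_zero] at hz hh; rw [hz, hh, sub_zero]
          rw [ht, this, norm_zero] at ht0; exact lt_irrefl 0 ht0
        · exact h0
      · exact hbase
      · linarith
    have hkey : (25 * t ^ 2 : ℝ) ^ ((p - 2) / 2) = 5 ^ (p - 2) * t ^ (p - 2) := by
      have h25 : (25 : ℝ) * t ^ 2 = (5 * t) ^ 2 := by ring
      rw [h25, ← Real.rpow_natCast (5 * t) 2, ← Real.rpow_mul (by positivity)]
      have : ((2 : ℕ) : ℝ) * ((p - 2) / 2) = p - 2 := by push_cast; ring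
      rw [this, Real.mul_rpow (by norm_num) ht0.le]
    have hprod : (5 : ℝ) ^ (2 - p) * (5 ^ (p - 2) * t ^ (p - 2)) * t ^ 2 = t ^ p := by
      rw [← Real.rpow_natCast t 2]
      rw [show ((5:ℝ) ^ (2 - p) * (5 ^ (p - 2) * t ^ (p - 2)) * t ^ ((2:ℕ):ℝ))
          = ((5:ℝ) ^ (2 - p) * 5 ^ (p - 2)) * (t ^ (p - 2) * t ^ ((2:ℕ):ℝ)) by ring]
      rw [← Real.rpow_add (by norm_num : (0:ℝ) < 5), ← Real.rpow_add ht0]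
      norm_num
    have h5 : (0 : ℝ) < (5 : ℝ) ^ (2 - p) := by positivity
    have hts : ‖ζ - η‖ = t := by rw [ht, norm_sub_rev]
    have hmain : t ^ p ≤ (5 : ℝ) ^ (2 - p) * (‖ζ‖ ^ 2 + ‖η‖ ^ 2) ^ ((p - 2) / 2) * t ^ 2 := by
      calc t ^ p = (5 : ℝ) ^ (2 - p) * (5 ^ (p - 2) * t ^ (p - 2)) * t ^ 2 := hprod.symm
        _ = (5 : ℝ) ^ (2 - p) * (25 * t ^ 2 : ℝ) ^ ((p - 2) / 2) * t ^ 2 := by rw [hkey]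
        _ ≤ (5 : ℝ) ^ (2 - p) * (‖ζ‖ ^ 2 + ‖η‖ ^ 2) ^ ((p - 2) / 2) * t ^ 2 := by
            apply mul_le_mul_of_nonneg_right (mul_le_mul_of_nonneg_left hmono h5.le) (by positivity)
    have hξη : (0 : ℝ) ≤ ‖ξ - η‖ ^ p := Real.rpow_nonneg (norm_nonneg _) p
    rw [hts]
    linarith
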